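/- arXiv:1612.01665 — 2 statements merged into one kernel-verified Lean document; each statement's English description precedes it below -/
import Mathlib

section
/- For k ≥ 1, the coefficient C(1) of x^(2k) in g(x)·h(x)^(2k+1) equals (3^k − (−1)^k)/(4·3^k), and its 2-adic valuation is ν_2(C(1)) = ν_2(k). -/
/-- The formal power series of `tanh x` over `ℚ`. -/
noncomputable def tanhPS : PowerSeries ℚ :=
  PowerSeries.mk fun n =>
    if Odd n then
      2 ^ (n + 1) * (2 ^ (n + 1) - 1) * bernoulli (n + 1) / (Nat.factorial (n + 1))
    else 0

/-- The formal power series `h(x) = x / tanh x = Σ_{n even} 2^n β_n x^n / n!` over `ℚ`. -/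
noncomputable def hPS : PowerSeries ℚ :=
  PowerSeries.mk fun n =>
    if Even n then 2 ^ n * bernoulli n / (Nat.factorial n) else 0

/-!
Write `E = e^{2x}`. From the Bernoulli generating function, `h · (E - 1) = x · (E + 1)`, and the
identity `2 coth 2x - coth x = tanh x` reads `x · tanh = h(2x) - h(x)`; together they give
`tanh · h = x` and the Riccati equation `x h' = h - h² + x²`. Comparing coefficients of `x^{2m+2}`
in `x (h^{2m+2})' = (2m+2) h^{2m+1} · x h'` shows `[x^{2m}] h^{2m+1} = 1` for all `m`.
Multiplying `g (3 + tanh²) = tanh²` by `h^{2k+3}` and using `tanh² h² = x²` then yields the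
recurrence `3 c_{k+1} + c_k = 1` with `c_0 = g(0) = 0`, whence the closed form. Finally
`3^k - (-1)^k` has 2-adic valuation `ν₂(k) + 2` by the lifting-the-exponent lemma, since
`4 ∣ 3 - (-1)`.
-/

open PowerSeries

noncomputable def expTwo : ℚ⟦X⟧ := rescale 2 (exp ℚ)

lemma coeff_expTwo (n : ℕ) : coeff n expTwo = 2 ^ n / n.factorial := by
  simp [expTwo, coeff_rescale, coeff_exp, div_eq_mul_inv]

lemma derivative_expTwo : d⁄dX ℚ expTwo = 2 * expTwo := by
  ext n
  rw [coeff_derivative, ← map_ofNat C 2, coeff_C_mul, coeff_expTwo, coeff_expTwo,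
    Nat.factorial_succ]
  push_cast
  field_simp
  ring

lemma rescale_two_expTwo : rescale 2 expTwo = expTwo ^ 2 := by
  rw [expTwo, rescale_rescale, sq, exp_mul_exp_eq_exp_add]
  norm_num

lemma expTwo_sub_one_ne_zero : expTwo - 1 ≠ 0 := by
  intro h
  simpa [coeff_expTwo] using congrArg (coeff 1) h

lemma expTwo_add_one_ne_zero : expTwo + 1 ≠ 0 := by
  intro h
  have h0 := congrArg (coeff 0) h
  rw [map_add, coeff_expTwo] at h0
  norm_num at h0

lemma hPS_eq_rescale_bernoulliPowerSeries : hPS = rescale 2 (bernoulliPowerSeries ℚ) + X := by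
  ext n
  rw [hPS, map_add, coeff_mk, coeff_rescale, bernoulliPowerSeries, coeff_mk]
  rcases n with _ | _ | n
  · norm_num [bernoulli_zero]
  · norm_num [bernoulli_one, coeff_one_X]
  · rw [coeff_X, if_neg (by omega : n + 2 ≠ 1), add_zero]
    rcases Nat.even_or_odd (n + 2) with he | ho
    · rw [if_pos he]
      simp only [Algebra.algebraMap_self, RingHom.id_apply]
      ring
    · rw [if_neg (Nat.not_even_iff_odd.2 ho), bernoulli_eq_bernoulli'_of_ne_one (by omega),
        bernoulli'_eq_zero_of_odd ho (by omega)]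
      simp

lemma hPS_mul_expTwo_sub_one : hPS * (expTwo - 1) = X * (expTwo + 1) := by
  have h := congrArg (rescale (2 : ℚ)) (bernoulliPowerSeries_mul_exp_sub_one ℚ)
  rw [map_mul, map_sub, map_one, rescale_X, ← expTwo, map_ofNat C 2] at h
  rw [hPS_eq_rescale_bernoulliPowerSeries]
  linear_combination h

lemma X_mul_tanhPS : X * tanhPS = rescale 2 hPS - hPS := by
  ext n
  rw [map_sub, coeff_rescale, hPS, tanhPS, coeff_mk]
  rcases n with _ | n
  · simp
  · rw [coeff_succ_X_mul, coeff_mk]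
    rcases Nat.even_or_odd n with he | ho
    · rw [if_neg (Nat.not_odd_iff_even.2 he), if_neg (by simpa [Nat.even_add_one] using he)]
      ring
    · rw [if_pos ho, if_pos (Nat.even_add_one.2 (Nat.not_even_iff_odd.2 ho))]
      ring

lemma tanhPS_mul_hPS : tanhPS * hPS = X := by
  have h₁ := hPS_mul_expTwo_sub_one
  have h₂ : rescale 2 hPS * (expTwo ^ 2 - 1) = 2 * X * (expTwo ^ 2 + 1) := by
    have h := congrArg (rescale (2 : ℚ)) h₁
    rwa [map_mul, map_mul, map_sub, map_add, map_one, rescale_X, rescale_two_expTwo,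
      map_ofNat C 2] at h
  have key : tanhPS * hPS * (X * ((expTwo + 1) * (expTwo - 1) ^ 2)) =
      X * (X * ((expTwo + 1) * (expTwo - 1) ^ 2)) := by
    linear_combination (hPS * (expTwo + 1) * (expTwo - 1) ^ 2) * X_mul_tanhPS
      + (2 * X * (expTwo ^ 2 + 1) - (expTwo + 1) * (hPS * (expTwo - 1) + X * (expTwo + 1))) * h₁
      + (hPS * (expTwo - 1)) * h₂
  exact mul_right_cancel₀ (mul_ne_zero X_ne_zero
    (mul_ne_zero expTwo_add_one_ne_zero (pow_ne_zero _ expTwo_sub_one_ne_zero))) key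

lemma X_mul_derivative_hPS : X * d⁄dX ℚ hPS = hPS - hPS ^ 2 + X ^ 2 := by
  have h := congrArg (d⁄dX ℚ) hPS_mul_expTwo_sub_one
  simp only [Derivation.leibniz, map_sub, map_add, Derivation.map_one_eq_zero, derivative_expTwo,
    derivative_X, smul_eq_mul] at h
  refine mul_right_cancel₀ (pow_ne_zero 2 expTwo_sub_one_ne_zero) ?_
  linear_combination (X * (expTwo - 1)) * h
    + (hPS * (expTwo - 1) - (expTwo - 1) * (X + 1)) * hPS_mul_expTwo_sub_one

lemma coeff_X_mul_derivative {R : Type*} [CommRing R] (f : R⟦X⟧) (n : ℕ) :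
    coeff n (X * d⁄dX R f) = n * coeff n f := by
  rcases n with _ | n
  · simp
  · rw [coeff_succ_X_mul, coeff_derivative, mul_comm]
    push_cast
    rfl

lemma coeff_pow_of_riccati {K : Type*} [Field K] [CharZero K] {f : K⟦X⟧}
    (hf₀ : constantCoeff f = 1) (hf : X * d⁄dX K f = f - f ^ 2 + X ^ 2) (m : ℕ) :
    coeff (2 * m) (f ^ (2 * m + 1)) = 1 := by
  induction m with
  | zero => simpa using hf₀
  | succ m ih =>
    have hpow : X * d⁄dX K (f ^ (2 * m + 2)) = ((2 * m + 2 : ℕ) : K⟦X⟧) *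
        (f ^ (2 * m + 2) - f ^ (2 * m + 3) + X ^ 2 * f ^ (2 * m + 1)) := by
      rw [Derivation.leibniz_pow, nsmul_eq_mul, smul_eq_mul, Nat.add_succ_sub_one]
      linear_combination ((2 * m + 2 : ℕ) * f ^ (2 * m + 1)) * hf
    have h := congrArg (coeff (2 * m + 2)) hpow
    rw [coeff_X_mul_derivative, ← map_natCast C, coeff_C_mul, map_add, map_sub,
      coeff_X_pow_mul, ih] at h
    have h' := mul_left_cancel₀ (Nat.cast_ne_zero.2 (Nat.succ_ne_zero _)) h
    show coeff (2 * m + 2) (f ^ (2 * m + 3)) = 1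
    linear_combination h'

lemma constantCoeff_hPS : constantCoeff hPS = 1 := by
  simp [hPS, ← coeff_zero_eq_constantCoeff_apply]

lemma constantCoeff_tanhPS : constantCoeff tanhPS = 0 := by
  simp [tanhPS, ← coeff_zero_eq_constantCoeff_apply]

lemma constantCoeff_eq_zero_of_mul_three_add_tanhPS_sq {g : ℚ⟦X⟧}
    (hg : g * (3 + tanhPS ^ 2) = tanhPS ^ 2) : constantCoeff g = 0 := by
  have h := congrArg constantCoeff hg
  simpa [constantCoeff_tanhPS, map_ofNat] using h

lemma three_mul_coeff_succ_add_coeff {g : ℚ⟦X⟧} (hg : g * (3 + tanhPS ^ 2) = tanhPS ^ 2)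
    (k : ℕ) :
    3 * coeff (2 * (k + 1)) (g * hPS ^ (2 * (k + 1) + 1)) + coeff (2 * k) (g * hPS ^ (2 * k + 1))
      = 1 := by
  have h : 3 * (g * hPS ^ (2 * k + 3)) + X ^ 2 * (g * hPS ^ (2 * k + 1)) =
      X ^ 2 * hPS ^ (2 * k + 1) := by
    linear_combination hPS ^ (2 * k + 3) * hg
      + (1 - g) * hPS ^ (2 * k + 1) * (tanhPS * hPS + X) * tanhPS_mul_hPS
  have h' := congrArg (coeff (2 * k + 2)) h
  rwa [map_add, ← map_ofNat C 3, coeff_C_mul, coeff_X_pow_mul, coeff_X_pow_mul,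
    coeff_pow_of_riccati constantCoeff_hPS X_mul_derivative_hPS] at h'

lemma coeff_mul_hPS_pow {g : ℚ⟦X⟧} (hg : g * (3 + tanhPS ^ 2) = tanhPS ^ 2) (k : ℕ) :
    coeff (2 * k) (g * hPS ^ (2 * k + 1)) = (3 ^ k - (-1 : ℚ) ^ k) / (4 * 3 ^ k) := by
  induction k with
  | zero => simp [constantCoeff_eq_zero_of_mul_three_add_tanhPS_sq hg]
  | succ k ih =>
    have h := three_mul_coeff_succ_add_coeff hg k
    rw [ih] at h
    field_simp at h ⊢
    linear_combination h

lemma emultiplicity_eq_padicValInt {p : ℕ} [Fact p.Prime] {z : ℤ} (hz : z ≠ 0) :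
    emultiplicity (p : ℤ) z = padicValInt p z := by
  rw [← Int.emultiplicity_natAbs, padicValInt,
    padicValNat_eq_emultiplicity (Int.natAbs_ne_zero.2 hz)]

lemma padicValInt_two_pow_sub_pow {x y : ℤ} (hxy : 4 ∣ x - y) (hxy₀ : x ≠ y) (hx : ¬2 ∣ x)
    {n : ℕ} (hn : n ≠ 0) :
    padicValInt 2 (x ^ n - y ^ n) = padicValInt 2 (x - y) + padicValNat 2 n := by
  have lte := Int.two_pow_sub_pow' n hxy hx
  have hn' : ((n : ℤ)) ≠ 0 := by exact_mod_cast hn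
  rw [show (2 : ℤ) = ((2 : ℕ) : ℤ) from rfl, emultiplicity_eq_padicValInt (sub_ne_zero.2 hxy₀),
    emultiplicity_eq_padicValInt hn', padicValInt.of_nat] at lte
  have hpow : x ^ n - y ^ n ≠ 0 := by
    intro h
    rw [h, emultiplicity_zero] at lte
    exact ENat.top_ne_natCast _ (by exact_mod_cast lte)
  rw [emultiplicity_eq_padicValInt hpow] at lte
  exact_mod_cast lte

lemma padicValRat_two_three_pow_sub_neg_one_pow_div (k : ℕ) :
    padicValRat 2 ((3 ^ k - (-1 : ℚ) ^ k) / (4 * 3 ^ k)) = padicValNat 2 k := by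
  rcases eq_or_ne k 0 with rfl | hk
  · simp
  have hnum : (3 : ℚ) ^ k - (-1) ^ k = ((3 ^ k - (-1) ^ k : ℤ) : ℚ) := by push_cast; ring
  have hden : (4 : ℚ) * 3 ^ k = ((4 * 3 ^ k : ℕ) : ℚ) := by push_cast; ring
  have hnum0 : (3 : ℤ) ^ k - (-1) ^ k ≠ 0 := by
    have : (3 : ℤ) ≤ 3 ^ k := le_self_pow₀ (by norm_num) hk
    rcases neg_one_pow_eq_or ℤ k with h | h <;> rw [h] <;> omega
  have h4 : padicValNat 2 4 = 2 := padicValNat.prime_pow (p := 2) 2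
  have hden2 : padicValNat 2 (4 * 3 ^ k) = 2 := by
    rw [padicValNat.mul (by norm_num) (by positivity),
      padicValNat.eq_zero_of_not_dvd (p := 2) (n := 3 ^ k) (by simp [Nat.two_dvd_ne_zero, Nat.pow_mod]),
      h4]
  rw [hnum, hden, padicValRat.div (by exact_mod_cast hnum0) (by positivity), padicValRat.of_int,
    padicValRat.of_nat, padicValInt_two_pow_sub_pow (by norm_num) (by norm_num) (by decide) hk]
  rw [hden2, show (3 : ℤ) - -1 = ((4 : ℕ) : ℤ) from rfl, padicValInt.of_nat, h4]
  push_cast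
  ring

theorem stmt18_general (k : ℕ)
    (g : PowerSeries ℚ) (hg : g * (3 + tanhPS ^ 2) = tanhPS ^ 2) :
    PowerSeries.coeff (R := ℚ) (2 * k) (g * hPS ^ (2 * k + 1)) =
        (3 ^ k - (-1 : ℚ) ^ k) / (4 * 3 ^ k) ∧
      padicValRat 2 (PowerSeries.coeff (R := ℚ) (2 * k) (g * hPS ^ (2 * k + 1))) =
        padicValNat 2 k := by
  have hcoeff := coeff_mul_hPS_pow hg k
  exact ⟨hcoeff, hcoeff ▸ padicValRat_two_three_pow_sub_neg_one_pow_div k⟩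

theorem stmt18 (k : ℕ) (hk : 1 ≤ k)
    (g : PowerSeries ℚ) (hg : g * (3 + tanhPS ^ 2) = tanhPS ^ 2) :
    PowerSeries.coeff (R := ℚ) (2 * k) (g * hPS ^ (2 * k + 1)) =
        (3 ^ k - (-1 : ℚ) ^ k) / (4 * 3 ^ k) ∧
      padicValRat 2 (PowerSeries.coeff (R := ℚ) (2 * k) (g * hPS ^ (2 * k + 1))) =
        padicValNat 2 k :=
  stmt18_general k g hg
end

section
/- For integers 1 ≤ s ≤ k, the rational number (1/((3+x)^s(1−x)))_{x^{k−s}}, i.e. the coefficient of x^(k−s) in the formal power series expansion of 1/((3+x)^s(1−x)), equals (1/(4^s 3^k))(3^k + (−1)^(k−s) Σ_{i=0}^{s−1} binom(k−s+i,i) 3^(s−1−i) 4^i). -/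
/-!
Since `(3 + X) + (1 - X) = 4`, the partial fraction identity
`1/((3+X)^s (1-X)) + 1/(3+X)^(s+1) = 4/((3+X)^(s+1) (1-X))` holds, and the coefficients of
`1/(3+X)^(s+1)` are rescaled binomial coefficients `(-1)^n C(n+s, s) / 3^(n+s+1)`. Induction on `s`,
starting from `1/(1-X) = 1 + X + X^2 + ⋯`, reduces the claim to a recursion satisfied by the
closed form, which is the splitting off of the last term of its sum.
-/

open PowerSeries Finset

namespace PowerSeries

variable {k : Type*} [Field k]

theorem inv_C_add_X_pow_succ {a : k} (ha : a ≠ 0) (j : ℕ) :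
    ((C a + X) ^ (j + 1))⁻¹ =
      C (a ^ (j + 1))⁻¹ * rescale (-a⁻¹) (mk fun n ↦ ((j + n).choose j : k)) := by
  have hlin : C a + X = C a * rescale (-a⁻¹) (1 - X) := by
    rw [map_sub, map_one, rescale_X, mul_sub, ← mul_assoc, ← map_mul]
    simp [ha]
  have hconst : constantCoeff ((C a + X) ^ (j + 1)) ≠ 0 := by simp [ha]
  rw [inv_eq_iff_mul_eq_one hconst, hlin, mul_pow, ← map_pow, ← map_pow]
  calc C (a ^ (j + 1))⁻¹ * rescale (-a⁻¹) (mk fun n ↦ ((j + n).choose j : k)) *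
        (C (a ^ (j + 1)) * rescale (-a⁻¹) ((1 - X) ^ (j + 1)))
      = C ((a ^ (j + 1))⁻¹ * a ^ (j + 1)) *
          rescale (-a⁻¹) ((mk fun n ↦ ((j + n).choose j : k)) * (1 - X) ^ (j + 1)) := by
        rw [map_mul, map_mul]
        ring
    _ = 1 := by
        rw [inv_mul_cancel₀ (pow_ne_zero _ ha), mk_add_choose_mul_one_sub_pow_eq_one]
        simp

theorem coeff_inv_C_add_X_pow_succ {a : k} (ha : a ≠ 0) (j n : ℕ) :
    coeff n ((C a + X) ^ (j + 1))⁻¹ = (-1) ^ n * (n + j).choose j / a ^ (n + j + 1) := by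
  rw [inv_C_add_X_pow_succ ha, coeff_C_mul, coeff_rescale, coeff_mk, neg_pow, inv_pow,
    add_comm j n]
  field_simp
  ring

theorem inv_pow_mul_add_inv_pow_succ {φ ψ : k⟦X⟧} (hφ : constantCoeff φ ≠ 0)
    (hψ : constantCoeff ψ ≠ 0) (s : ℕ) :
    (φ ^ s * ψ)⁻¹ + (φ ^ (s + 1))⁻¹ = (φ + ψ) * (φ ^ (s + 1) * ψ)⁻¹ := by
  rw [PowerSeries.mul_inv_rev, PowerSeries.mul_inv_rev, pow_succ, PowerSeries.mul_inv_rev]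
  linear_combination -(ψ⁻¹ * (φ ^ s)⁻¹) * PowerSeries.mul_inv_cancel φ hφ
    - (φ⁻¹ * (φ ^ s)⁻¹) * PowerSeries.mul_inv_cancel ψ hψ

end PowerSeries

/-- The right-hand side of the theorem, with `k = n + s`. -/
def closedForm (s n : ℕ) : ℚ :=
  1 / (4 ^ s * 3 ^ (n + s)) *
    (3 ^ (n + s) + (-1) ^ n * ∑ i ∈ range s, ((n + i).choose i : ℚ) * 3 ^ (s - 1 - i) * 4 ^ i)

theorem closedForm_zero (n : ℕ) : closedForm 0 n = 1 := by
  simp [closedForm]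

theorem four_mul_closedForm_succ (s n : ℕ) :
    4 * closedForm (s + 1) n =
      closedForm s n + (-1) ^ n * (n + s).choose s / 3 ^ (n + s + 1) := by
  have hsum : ∑ i ∈ range (s + 1), ((n + i).choose i : ℚ) * 3 ^ (s + 1 - 1 - i) * 4 ^ i =
      3 * ∑ i ∈ range s, ((n + i).choose i : ℚ) * 3 ^ (s - 1 - i) * 4 ^ i +
        (n + s).choose s * 4 ^ s := by
    rw [sum_range_succ, mul_sum, Nat.add_sub_cancel, Nat.sub_self, pow_zero, mul_one]
    congr 1
    refine sum_congr rfl fun i hi ↦ ?_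
    rw [show s - i = s - 1 - i + 1 by have := mem_range.mp hi; omega, pow_succ]
    ring
  rw [closedForm, closedForm, hsum, ← add_assoc n s 1]
  field_simp
  ring

theorem coeff_inv_three_add_X_pow_mul_one_sub_X (s n : ℕ) :
    coeff n (((3 + X : ℚ⟦X⟧) ^ s * (1 - X))⁻¹) = closedForm s n := by
  have h3 : (C (3 : ℚ) : ℚ⟦X⟧) = 3 := map_ofNat C 3
  have hu : constantCoeff (3 + X : ℚ⟦X⟧) ≠ 0 := by simp [← h3]
  have hv : constantCoeff (1 - X : ℚ⟦X⟧) ≠ 0 := by simp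
  induction s with
  | zero =>
    rw [closedForm_zero, pow_zero, one_mul,
      (inv_eq_iff_mul_eq_one hv).mpr (mk_one_mul_one_sub_eq_one ℚ), coeff_mk, Pi.one_apply]
  | succ s ih =>
    rw [← mul_right_inj' four_ne_zero, four_mul_closedForm_succ, ← ih,
      ← coeff_inv_C_add_X_pow_succ three_ne_zero, h3, ← map_add,
      inv_pow_mul_add_inv_pow_succ hu hv,
      show (3 + X + (1 - X) : ℚ⟦X⟧) = C 4 by rw [map_ofNat]; ring, coeff_C_mul]

theorem stmt19_general (k s : ℕ) (hsk : s ≤ k) :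
    PowerSeries.coeff (R := ℚ) (k - s) (((3 + PowerSeries.X) ^ s * (1 - PowerSeries.X))⁻¹) =
      (1 / (4 ^ s * 3 ^ k)) *
        (3 ^ k + (-1 : ℚ) ^ (k - s) *
          ∑ i ∈ Finset.range s, ((k - s + i).choose i : ℚ) * 3 ^ (s - 1 - i) * 4 ^ i) := by
  obtain ⟨n, rfl⟩ := Nat.exists_eq_add_of_le' hsk
  rw [Nat.add_sub_cancel, coeff_inv_three_add_X_pow_mul_one_sub_X, closedForm]

theorem stmt19 (k s : ℕ) (hs : 1 ≤ s) (hsk : s ≤ k) :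
    PowerSeries.coeff (R := ℚ) (k - s) (((3 + PowerSeries.X) ^ s * (1 - PowerSeries.X))⁻¹) =
      (1 / (4 ^ s * 3 ^ k)) *
        (3 ^ k + (-1 : ℚ) ^ (k - s) *
          ∑ i ∈ Finset.range s, ((k - s + i).choose i : ℚ) * 3 ^ (s - 1 - i) * 4 ^ i) :=
  stmt19_general k s hsk
end
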